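/- arXiv:2102.02870 — 3 statements merged into one kernel-verified Lean document; each statement's English description precedes it below -/
import Mathlib

section
/- Let Y, f, f̂, M, M̂ be real numbers and h > 0 with M² ≥ h and M̂² ≥ h. Set q = (Y − f)²/M² + log(M²) and q̂ = (Y − f̂)²/M̂² + log(M̂²). Then |q̂ − q| ≤ (2/h^{3/2})·(Y − f̂)²·|M̂ − M| + (1/h)·|f̂ − f|·|f̂ + f − 2Y| + (2/h^{1/2})·|M̂ − M|. -/
/-!
Write `s = √h`, so that `|M|, |M̂| ≥ s`. The difference of contrasts splits as
`(Y - f̂)² (M̂⁻² - M⁻²) + ((Y - f̂)² - (Y - f)²) / M² + (log M̂² - log M²)`.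
On `[s, ∞)` the maps `x ↦ x⁻¹` and `log` are Lipschitz with constants `s⁻²` and `s⁻¹`,
which bounds the first and last terms; the middle one is a difference of squares over `M² ≥ h`.
-/

open Real

lemma log_sub_log_le_abs_sub_div {x y s : ℝ} (hs : 0 < s) (hx : 0 < x) (hy : s ≤ y) :
    log x - log y ≤ |x - y| / s := by
  have hy0 : 0 < y := hs.trans_le hy
  calc log x - log y = log (x / y) := (log_div hx.ne' hy0.ne').symm
    _ ≤ x / y - 1 := log_le_sub_one_of_pos (div_pos hx hy0)
    _ = (x - y) / y := by field_simp
    _ ≤ |x - y| / y := by gcongr; exact le_abs_self _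
    _ ≤ |x - y| / s := by gcongr

lemma abs_log_sub_log_le {x y s : ℝ} (hs : 0 < s) (hx : s ≤ x) (hy : s ≤ y) :
    |log x - log y| ≤ |x - y| / s := by
  rw [abs_sub_le_iff]
  refine ⟨log_sub_log_le_abs_sub_div hs (hs.trans_le hx) hy, ?_⟩
  rw [abs_sub_comm]
  exact log_sub_log_le_abs_sub_div hs (hs.trans_le hy) hx

lemma abs_log_sq_sub_log_sq_le {a b s : ℝ} (hs : 0 < s) (ha : s ≤ |a|) (hb : s ≤ |b|) :
    |log (a ^ 2) - log (b ^ 2)| ≤ 2 / s * |a - b| := by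
  have hsplit : log (a ^ 2) - log (b ^ 2) = 2 * (log |a| - log |b|) := by
    simp only [log_pow, log_abs]; push_cast; ring
  calc |log (a ^ 2) - log (b ^ 2)| = 2 * |(log |a| - log |b|)| := by
        rw [hsplit, abs_mul, abs_two]
    _ ≤ 2 * (|(|a| - |b|)| / s) := by gcongr; exact abs_log_sub_log_le hs ha hb
    _ ≤ 2 * (|a - b| / s) := by gcongr 2 * (?_ / s); exact abs_abs_sub_abs_le_abs_sub a b
    _ = 2 / s * |a - b| := by ring

lemma abs_inv_sub_inv_le {x y s : ℝ} (hs : 0 < s) (hx : s ≤ x) (hy : s ≤ y) :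
    |x⁻¹ - y⁻¹| ≤ |x - y| / s ^ 2 := by
  have hx0 : 0 < x := hs.trans_le hx
  have hy0 : 0 < y := hs.trans_le hy
  rw [inv_sub_inv hx0.ne' hy0.ne', abs_div, abs_sub_comm, abs_of_pos (mul_pos hx0 hy0), sq]
  gcongr

lemma abs_inv_sq_sub_inv_sq_le {a b s : ℝ} (hs : 0 < s) (ha : s ≤ |a|) (hb : s ≤ |b|) :
    |(a ^ 2)⁻¹ - (b ^ 2)⁻¹| ≤ 2 / s ^ 3 * |a - b| := by
  have hsum : |a|⁻¹ + |b|⁻¹ ≤ 2 / s := by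
    have := inv_anti₀ hs ha
    have := inv_anti₀ hs hb
    linarith [show 2 / s = s⁻¹ + s⁻¹ by ring]
  have hdiff : (a ^ 2)⁻¹ - (b ^ 2)⁻¹ = (|a|⁻¹ - |b|⁻¹) * (|a|⁻¹ + |b|⁻¹) := by
    rw [← sq_abs a, ← sq_abs b]; ring
  have hpos : 0 < |a|⁻¹ + |b|⁻¹ := by
    have := hs.trans_le ha
    have := hs.trans_le hb
    positivity
  rw [hdiff, abs_mul, abs_of_pos hpos]
  calc |(|a|⁻¹ - |b|⁻¹)| * (|a|⁻¹ + |b|⁻¹) ≤ |(|a| - |b|)| / s ^ 2 * (2 / s) := by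
        gcongr; exact abs_inv_sub_inv_le hs ha hb
    _ ≤ |a - b| / s ^ 2 * (2 / s) := by
        gcongr ?_ / s ^ 2 * (2 / s); exact abs_abs_sub_abs_le_abs_sub a b
    _ = 2 / s ^ 3 * |a - b| := by ring

lemma abs_sq_sub_sq_div_le {u v h M : ℝ} (hh : 0 < h) (hM : h ≤ M ^ 2) :
    |(u ^ 2 - v ^ 2) / M ^ 2| ≤ 1 / h * |v - u| * |u + v| := by
  rw [abs_div, abs_of_pos (hh.trans_le hM), sq_sub_sq, abs_mul, abs_sub_comm u v, mul_assoc,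
    one_div_mul_eq_div, mul_comm |u + v|]
  gcongr

/-- Deterministic bound on the change in the Gaussian quasi-likelihood contrast
`q = (Y − f)²/M² + log(M²)` when `(f, M)` is replaced by `(f̂, M̂)`. -/
theorem stmt_0 (Y f fhat M Mhat h : ℝ) (hh : 0 < h)
    (hM : h ≤ M ^ 2) (hMhat : h ≤ Mhat ^ 2) :
    |((Y - fhat) ^ 2 / Mhat ^ 2 + Real.log (Mhat ^ 2))
        - ((Y - f) ^ 2 / M ^ 2 + Real.log (M ^ 2))|
      ≤ (2 / h ^ ((3 : ℝ) / 2)) * (Y - fhat) ^ 2 * |Mhat - M|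
        + (1 / h) * |fhat - f| * |fhat + f - 2 * Y|
        + (2 / h ^ ((1 : ℝ) / 2)) * |Mhat - M| := by
  set s := √h
  have hs : 0 < s := sqrt_pos.mpr hh
  have hsM : s ≤ |M| := sqrt_sq_eq_abs M ▸ sqrt_le_sqrt hM
  have hsMhat : s ≤ |Mhat| := sqrt_sq_eq_abs Mhat ▸ sqrt_le_sqrt hMhat
  have h12 : h ^ ((1 : ℝ) / 2) = s := (sqrt_eq_rpow h).symm
  have h32 : h ^ ((3 : ℝ) / 2) = s ^ 3 := by
    rw [show (3 : ℝ) / 2 = 1 / 2 * (3 : ℕ) by norm_num, rpow_mul hh.le, h12, rpow_natCast]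
  have hscale : |(Y - fhat) ^ 2 * ((Mhat ^ 2)⁻¹ - (M ^ 2)⁻¹)|
      ≤ 2 / s ^ 3 * (Y - fhat) ^ 2 * |Mhat - M| := by
    rw [abs_mul, abs_sq, mul_comm (2 / s ^ 3), mul_assoc]
    gcongr
    exact abs_inv_sq_sub_inv_sq_le hs hsMhat hsM
  have hmean : |((Y - fhat) ^ 2 - (Y - f) ^ 2) / M ^ 2|
      ≤ 1 / h * |fhat - f| * |fhat + f - 2 * Y| := by
    have := abs_sq_sub_sq_div_le (u := Y - fhat) (v := Y - f) hh hM
    rwa [show Y - f - (Y - fhat) = fhat - f by ring,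
      show Y - fhat + (Y - f) = -(fhat + f - 2 * Y) by ring, abs_neg] at this
  have hlog := abs_log_sq_sub_log_sq_le hs hsMhat hsM
  have hsplit : (Y - fhat) ^ 2 / Mhat ^ 2 + log (Mhat ^ 2) - ((Y - f) ^ 2 / M ^ 2 + log (M ^ 2))
      = (Y - fhat) ^ 2 * ((Mhat ^ 2)⁻¹ - (M ^ 2)⁻¹)
        + ((Y - fhat) ^ 2 - (Y - f) ^ 2) / M ^ 2 + (log (Mhat ^ 2) - log (M ^ 2)) := by ring
  rw [h12, h32, hsplit]
  linarith [abs_add_three ((Y - fhat) ^ 2 * ((Mhat ^ 2)⁻¹ - (M ^ 2)⁻¹))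
    (((Y - fhat) ^ 2 - (Y - f) ^ 2) / M ^ 2) (log (Mhat ^ 2) - log (M ^ 2))]
end

section
/- Let (Ω, 𝓕, P) be a probability space, d ≥ 1, and let v, w : Ω → ℝ^d be random vectors and H : Ω → ℝ a random variable with H ≥ h a.s. for some h > 0. Assume E[H⁻¹‖v‖²] < ∞ and E[H⁻²‖w‖²] < ∞, and define the d × d matrix M by M_{ij} = E[ 2·H⁻¹·v_i·v_j + H⁻²·w_i·w_j ]. If for every nonzero c ∈ ℝ^d it is not the case that both c ⬝ v = 0 almost surely and c ⬝ w = 0 almost surely, then M is positive definite. -/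
open MeasureTheory Matrix

/-!
Write `M` as the entrywise expectation of `A = 2 H⁻¹ v vᵀ + H⁻² w wᵀ`. The moment bounds make
every entry of `A` integrable, so the quadratic form of `M` is the expectation of
`cᵀ A c = 2 H⁻¹ (c ⬝ v)² + H⁻² (c ⬝ w)² ≥ 0`. A nonnegative function with zero expectation
vanishes a.s., and since `H > 0` this forces `c ⬝ v = 0` and `c ⬝ w = 0` a.s., which the
non-degeneracy hypothesis excludes for `c ≠ 0`.
-/

lemma eq_zero_and_eq_zero_of_mul_sq_add_mul_sq_eq_zero {a b s t : ℝ} (ha : 0 < a) (hb : 0 < b)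
    (h : a * s ^ 2 + b * t ^ 2 = 0) : s = 0 ∧ t = 0 := by
  obtain ⟨hs, ht⟩ := (add_eq_zero_iff_of_nonneg (by positivity) (by positivity)).1 h
  simpa [ha.ne', hb.ne'] using And.intro hs ht

section

variable {ι : Type*} [Fintype ι]

lemma abs_mul_le_sum_sq (u : ι → ℝ) (i j : ι) : |u i * u j| ≤ ∑ k, u k ^ 2 := by
  have hle : ∀ l, u l ^ 2 ≤ ∑ k, u k ^ 2 := fun l =>
    Finset.single_le_sum (fun k _ => sq_nonneg (u k)) (Finset.mem_univ l)
  rw [abs_le]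
  constructor <;> nlinarith [hle i, hle j, sq_nonneg (u i + u j), sq_nonneg (u i - u j)]

lemma dotProduct_smul_vecMulVec_self_add_mulVec (a b : ℝ) (u v x : ι → ℝ) :
    x ⬝ᵥ (a • vecMulVec u u + b • vecMulVec v v) *ᵥ x = a * (x ⬝ᵥ u) ^ 2 + b * (x ⬝ᵥ v) ^ 2 := by
  simp [add_mulVec, smul_mulVec, vecMulVec_mulVec, dotProduct_comm _ x, sq]

lemma posSemidef_smul_vecMulVec_self_add {a b : ℝ} (ha : 0 ≤ a) (hb : 0 ≤ b) (u v : ι → ℝ) :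
    (a • vecMulVec u u + b • vecMulVec v v).PosSemidef :=
  ((posSemidef_vecMulVec_self_star u).smul ha).add ((posSemidef_vecMulVec_self_star v).smul hb)

variable {Ω : Type*} {m0 : MeasurableSpace Ω} {μ : Measure Ω}

lemma integrable_mul_apply_mul_apply {a : Ω → ℝ} {u : Ω → ι → ℝ} (ha : Measurable a)
    (hu : Measurable u) (ha0 : ∀ᵐ ω ∂μ, 0 ≤ a ω)
    (hint : Integrable (fun ω => a ω * ∑ k, u ω k ^ 2) μ) (i j : ι) :
    Integrable (fun ω => a ω * (u ω i * u ω j)) μ := by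
  refine hint.mono' (by fun_prop) ?_
  filter_upwards [ha0] with ω hω
  rw [Real.norm_eq_abs, abs_mul, abs_of_nonneg hω]
  exact mul_le_mul_of_nonneg_left (abs_mul_le_sum_sq (u ω) i j) hω

lemma integrable_smul_vecMulVec_self_add_apply {a b : Ω → ℝ} {u v : Ω → ι → ℝ}
    (ha : Measurable a) (hb : Measurable b) (hu : Measurable u) (hv : Measurable v)
    (ha0 : ∀ᵐ ω ∂μ, 0 ≤ a ω) (hb0 : ∀ᵐ ω ∂μ, 0 ≤ b ω)
    (hintu : Integrable (fun ω => a ω * ∑ k, u ω k ^ 2) μ)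
    (hintv : Integrable (fun ω => b ω * ∑ k, v ω k ^ 2) μ) (i j : ι) :
    Integrable (fun ω => (a ω • vecMulVec (u ω) (u ω) + b ω • vecMulVec (v ω) (v ω)) i j) μ :=
  (integrable_mul_apply_mul_apply ha hu ha0 hintu i j).add
    (integrable_mul_apply_mul_apply hb hv hb0 hintv i j)

variable {A : Ω → Matrix ι ι ℝ}

lemma integrable_dotProduct_mulVec (hA : ∀ i j, Integrable (fun ω => A ω i j) μ) (x y : ι → ℝ) :
    Integrable (fun ω => x ⬝ᵥ A ω *ᵥ y) μ := by
  simp only [dotProduct, mulVec, Finset.mul_sum]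
  exact integrable_finsetSum _ fun i _ => integrable_finsetSum _ fun j _ =>
    ((hA i j).mul_const _).const_mul _

lemma integral_dotProduct_mulVec (hA : ∀ i j, Integrable (fun ω => A ω i j) μ) (x y : ι → ℝ) :
    ∫ ω, x ⬝ᵥ A ω *ᵥ y ∂μ = x ⬝ᵥ (of fun i j => ∫ ω, A ω i j ∂μ) *ᵥ y := by
  simp only [dotProduct, mulVec, Finset.mul_sum, of_apply]
  rw [integral_finsetSum _ fun i _ => integrable_finsetSum _ fun j _ =>
    ((hA i j).mul_const _).const_mul _]
  refine Finset.sum_congr rfl fun i _ => ?_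
  rw [integral_finsetSum _ fun j _ => ((hA i j).mul_const _).const_mul _]
  refine Finset.sum_congr rfl fun j _ => ?_
  rw [integral_const_mul, integral_mul_const]

lemma posDef_integral (hA : ∀ i j, Integrable (fun ω => A ω i j) μ)
    (hpsd : ∀ᵐ ω ∂μ, (A ω).PosSemidef)
    (hnondeg : ∀ x : ι → ℝ, x ≠ 0 → ¬ (fun ω => x ⬝ᵥ A ω *ᵥ x) =ᵐ[μ] 0) :
    (of fun i j => ∫ ω, A ω i j ∂μ).PosDef := by
  have hsymm : (of fun i j => ∫ ω, A ω i j ∂μ).IsHermitian := by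
    ext i j
    refine integral_congr_ae ?_
    filter_upwards [hpsd] with ω hω
    simpa using congrFun (congrFun hω.1 i) j
  refine PosDef.of_dotProduct_mulVec_pos hsymm fun x hx => ?_
  have hnonneg : 0 ≤ᵐ[μ] fun ω => x ⬝ᵥ A ω *ᵥ x := by
    filter_upwards [hpsd] with ω hω
    simpa using hω.dotProduct_mulVec_nonneg x
  rw [star_trivial, ← integral_dotProduct_mulVec hA]
  refine (integral_nonneg_of_ae hnonneg).lt_of_ne fun hzero => hnondeg x hx ?_
  exact (integral_eq_zero_iff_of_nonneg_ae hnonneg (integrable_dotProduct_mulVec hA x x)).mp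
    hzero.symm

end

theorem stmt_11_general {Ω : Type*} {m0 : MeasurableSpace Ω} (μ : Measure Ω)
    (d : ℕ) (v w : Ω → Fin d → ℝ) (H : Ω → ℝ) (h : ℝ) (hh : 0 < h)
    (hHmeas : Measurable H) (hvmeas : Measurable v) (hwmeas : Measurable w)
    (hHge : ∀ᵐ ω ∂μ, h ≤ H ω)
    (hint1 : Integrable (fun ω => (H ω)⁻¹ * ∑ i, (v ω i) ^ 2) μ)
    (hint2 : Integrable (fun ω => ((H ω) ^ 2)⁻¹ * ∑ i, (w ω i) ^ 2) μ)
    (M : Matrix (Fin d) (Fin d) ℝ)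
    (hM : ∀ i j, M i j
      = ∫ ω, (2 * (H ω)⁻¹ * v ω i * v ω j + ((H ω) ^ 2)⁻¹ * w ω i * w ω j) ∂μ)
    (hnondeg : ∀ c : Fin d → ℝ, c ≠ 0 →
      ¬((fun ω => c ⬝ᵥ v ω) =ᵐ[μ] 0 ∧ (fun ω => c ⬝ᵥ w ω) =ᵐ[μ] 0)) :
    M.PosDef := by
  have hHpos : ∀ᵐ ω ∂μ, 0 < H ω := hHge.mono fun ω hω => hh.trans_le hω
  set A : Ω → Matrix (Fin d) (Fin d) ℝ := fun ω =>
    (2 * (H ω)⁻¹) • vecMulVec (v ω) (v ω) + ((H ω) ^ 2)⁻¹ • vecMulVec (w ω) (w ω)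
  have hMA : M = of fun i j => ∫ ω, A ω i j ∂μ := by
    ext i j
    simp [hM, A, vecMulVec_apply, mul_assoc]
  rw [hMA]
  refine posDef_integral (fun i j => ?_) ?_ fun x hx hzero => hnondeg x hx ?_
  · exact integrable_smul_vecMulVec_self_add_apply (by fun_prop) (by fun_prop) hvmeas hwmeas
      (hHpos.mono fun ω hω => by positivity) (.of_forall fun ω => by positivity)
      (by simpa only [mul_assoc] using hint1.const_mul 2) hint2 i j
  · filter_upwards [hHpos] with ω hω
    exact posSemidef_smul_vecMulVec_self_add (by positivity) (by positivity) _ _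
  · have hboth : ∀ᵐ ω ∂μ, x ⬝ᵥ v ω = 0 ∧ x ⬝ᵥ w ω = 0 := by
      filter_upwards [hzero, hHpos] with ω hω hHω
      rw [Pi.zero_apply, dotProduct_smul_vecMulVec_self_add_mulVec] at hω
      exact eq_zero_and_eq_zero_of_mul_sq_add_mul_sq_eq_zero (by positivity) (by positivity) hω
    exact ⟨hboth.mono fun _ => And.left, hboth.mono fun _ => And.right⟩

/-- Positive definiteness of the matrix `F = E[2 H⁻¹ v vᵀ + H⁻² w wᵀ]` under the
non-degeneracy assumption that no nonzero `c` satisfies both `c ⬝ v = 0` a.s. and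
`c ⬝ w = 0` a.s. -/
theorem stmt_11 {Ω : Type*} {m0 : MeasurableSpace Ω} (μ : Measure Ω) [IsProbabilityMeasure μ]
    (d : ℕ) (hd : 1 ≤ d) (v w : Ω → Fin d → ℝ) (H : Ω → ℝ) (h : ℝ) (hh : 0 < h)
    (hHmeas : Measurable H) (hvmeas : Measurable v) (hwmeas : Measurable w)
    (hHge : ∀ᵐ ω ∂μ, h ≤ H ω)
    (hint1 : Integrable (fun ω => (H ω)⁻¹ * ∑ i, (v ω i) ^ 2) μ)
    (hint2 : Integrable (fun ω => ((H ω) ^ 2)⁻¹ * ∑ i, (w ω i) ^ 2) μ)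
    (M : Matrix (Fin d) (Fin d) ℝ)
    (hM : ∀ i j, M i j
      = ∫ ω, (2 * (H ω)⁻¹ * v ω i * v ω j + ((H ω) ^ 2)⁻¹ * w ω i * w ω j) ∂μ)
    (hnondeg : ∀ c : Fin d → ℝ, c ≠ 0 →
      ¬((fun ω => c ⬝ᵥ v ω) =ᵐ[μ] 0 ∧ (fun ω => c ⬝ᵥ w ω) =ᵐ[μ] 0)) :
    M.PosDef :=
  stmt_11_general (m0 := m0) μ d v w H h hh hHmeas hvmeas hwmeas hHge hint1 hint2 M hM hnondeg
end

section
/- Let r ≥ 1, d_x ≥ 1, and let f, M : ℝ^ℕ × (ℝ^{d_x})^ℕ → ℝ be functions such that for Ψ ∈ {f, M} there are summable nonnegative sequences (a_k^Ψ), (b_k^Ψ) with |Ψ(y, x) − Ψ(y', x')| ≤ Σ_k a_k^Ψ·|y_k − y'_k| + Σ_k b_k^Ψ·‖x_k − x'_k‖ for all (y, x), (y', x'). Let ξ₀ be a real random variable with ‖ξ₀‖_r = (E|ξ₀|^r)^{1/r} < ∞, let η₀ be a random variable on a measurable space E, and let g : (ℝ^{d_x})^ℕ × E → ℝ^{d_x}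 be measurable with ‖g(x; η₀) − g(x'; η₀)‖_{L^r} ≤ Σ_k α_k(g)·‖x_k − x'_k‖ for a nonnegative sequence (α_k(g)). For w > 0 define the norm ‖(u, v)‖_w = |u| + w·‖v‖ on ℝ × ℝ^{d_x}, and define F(z; ξ₀, η₀) = ( M(y, x)·ξ₀ + f(y, x), g(x; η₀) ) for z = ((y_k, x_k))_k. Then for all z = ((y_k, x_k))_k and z̃ = ((ỹ_k, x̃_k))_k, ‖ ‖F(z; ξ₀, η₀) − F(z̃; ξ₀, η₀)‖_w ‖_{L^r} ≤ Σ_{k≥1} α_k·‖(y_k − ỹ_k, x_k − x̃_k)‖_w, where α_k = max{ a_k^f + ‖ξ₀‖_r·a_k^M, (1/w)·(b_k^f + ‖ξ₀‖_r·b_k^M) + α_k(g) }. -/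
open MeasureTheory
open scoped ENNReal NNReal

/-! The first coordinate of `F(z) - F(z̃)` is `ΔM · ξ₀ + Δf`, of `L^r` norm at most
`|ΔM| ‖ξ₀‖_r + |Δf|`, and the second has `L^r` norm at most `Σ_k α_k(g) ‖x_k - x̃_k‖`.
Bounding `|ΔM|` and `|Δf|` by their Lipschitz sums and regrouping lag by lag gives the
coefficient `a_k^f + ‖ξ₀‖_r a_k^M` on `|y_k - ỹ_k|` and `b_k^f + ‖ξ₀‖_r b_k^M + w α_k(g)` on
`‖x_k - x̃_k‖`, and `A s + B t ≤ max A (B / w) · (s + w t)`. Since `g(x; η₀)` need not be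
measurable, Minkowski's inequality is needed with only one summand measurable. -/

namespace ENNReal

variable {α : Type*} [MeasurableSpace α] {μ : Measure α}

theorem lintegral_Lp_add_le_of_aemeasurable_left {p : ℝ} {f g : α → ℝ≥0∞}
    (hf : AEMeasurable f μ) (hp1 : 1 ≤ p) :
    (∫⁻ a, (f + g) a ^ p ∂μ) ^ (1 / p) ≤
      (∫⁻ a, f a ^ p ∂μ) ^ (1 / p) + (∫⁻ a, g a ^ p ∂μ) ^ (1 / p) := by
  have hp0 : p ≠ 0 := (zero_lt_one.trans_le hp1).ne'
  obtain ⟨φ, hφm, hφle, hφeq⟩ := exists_measurable_le_lintegral_eq μ fun a => (f + g) a ^ p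
  -- a measurable substitute for `g`: `h ≤ g` and `φ ≤ (f + h) ^ p` almost everywhere
  set h : α → ℝ≥0∞ := fun a => φ a ^ p⁻¹ - hf.mk f a
  have hφ_root (a : α) : φ a ^ p⁻¹ ≤ (f + g) a := by
    simpa [hp0] using rpow_le_rpow (hφle a) (inv_nonneg.2 (zero_le_one.trans hp1))
  have hhg : ∀ᵐ a ∂μ, h a ≤ g a := hf.ae_eq_mk.mono fun a ha =>
    tsub_le_iff_left.2 (by simpa [← ha] using hφ_root a)
  have hφh : ∀ᵐ a ∂μ, φ a ≤ (f + h) a ^ p := hf.ae_eq_mk.mono fun a ha => by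
    calc φ a = (φ a ^ p⁻¹) ^ p := (rpow_inv_rpow hp0 _).symm
      _ ≤ (f + h) a ^ p := by
        gcongr
        simpa [h, ha] using le_add_tsub
  calc (∫⁻ a, (f + g) a ^ p ∂μ) ^ (1 / p) = (∫⁻ a, φ a ∂μ) ^ (1 / p) := by rw [hφeq]
    _ ≤ (∫⁻ a, (f + h) a ^ p ∂μ) ^ (1 / p) := by gcongr 1; exact lintegral_mono_ae hφh
    _ ≤ (∫⁻ a, f a ^ p ∂μ) ^ (1 / p) + (∫⁻ a, h a ^ p ∂μ) ^ (1 / p) :=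
      lintegral_Lp_add_le hf ((hφm.pow_const _).sub hf.measurable_mk).aemeasurable hp1
    _ ≤ (∫⁻ a, f a ^ p ∂μ) ^ (1 / p) + (∫⁻ a, g a ^ p ∂μ) ^ (1 / p) := by
      gcongr 2
      exact lintegral_mono_ae (hhg.mono fun a ha => by gcongr)

end ENNReal

namespace MeasureTheory

variable {α ε : Type*} {m : MeasurableSpace α} [TopologicalSpace ε] [ESeminormedAddMonoid ε]
  {p : ℝ≥0∞} {μ : Measure α}

theorem eLpNorm_add_le_of_aestronglyMeasurable_left {f g : α → ε}
    (hf : AEStronglyMeasurable f μ) (hp1 : 1 ≤ p) :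
    eLpNorm (f + g) p μ ≤ eLpNorm f p μ + eLpNorm g p μ := by
  rcases eq_or_ne p ∞ with rfl | hp_top
  · simpa using eLpNormEssSup_add_le
  have hp0 : p ≠ 0 := (zero_lt_one.trans_le hp1).ne'
  have hp1_real : 1 ≤ p.toReal := by
    rwa [← ENNReal.toReal_one, ENNReal.toReal_le_toReal ENNReal.one_ne_top hp_top]
  simp only [eLpNorm_eq_eLpNorm' hp0 hp_top, eLpNorm']
  calc (∫⁻ a, ‖(f + g) a‖ₑ ^ p.toReal ∂μ) ^ (1 / p.toReal)
      ≤ (∫⁻ a, ((‖f ·‖ₑ) + (‖g ·‖ₑ)) a ^ p.toReal ∂μ) ^ (1 / p.toReal) := by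
        gcongr with a
        exact enorm_add_le _ _
    _ ≤ _ := ENNReal.lintegral_Lp_add_le_of_aemeasurable_left hf.enorm hp1_real

theorem eLpNorm_const_of_isProbabilityMeasure (c : ε) (hp0 : p ≠ 0) [IsProbabilityMeasure μ] :
    eLpNorm (fun _ : α => c) p μ = ‖c‖ₑ := by
  simp [eLpNorm_const c hp0 (IsProbabilityMeasure.ne_zero μ)]

theorem eLpNorm_smul_add_const_le {𝕜 F : Type*} [NormedField 𝕜] [NormedAddCommGroup F]
    [NormedSpace 𝕜 F] [IsProbabilityMeasure μ] {ξ : α → F} (hξ : AEStronglyMeasurable ξ μ)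
    (hp1 : 1 ≤ p) (a : 𝕜) (c : F) :
    eLpNorm (fun x => a • ξ x + c) p μ ≤ ‖a‖ₑ * eLpNorm ξ p μ + ‖c‖ₑ := by
  calc eLpNorm (fun x => a • ξ x + c) p μ ≤ eLpNorm (a • ξ) p μ + eLpNorm (fun _ => c) p μ :=
        eLpNorm_add_le_of_aestronglyMeasurable_left (hξ.const_smul a) hp1
    _ = ‖a‖ₑ * eLpNorm ξ p μ + ‖c‖ₑ := by
        rw [eLpNorm_const_smul, eLpNorm_const_of_isProbabilityMeasure c
          (zero_lt_one.trans_le hp1).ne']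

theorem eLpNorm_abs_mul_add_sub_le [IsProbabilityMeasure μ] {ξ : α → ℝ}
    (hξ : AEStronglyMeasurable ξ μ) (hp1 : 1 ≤ p) (a b a' b' : ℝ) :
    eLpNorm (fun x => |(a * ξ x + b) - (a' * ξ x + b')|) p μ
      ≤ ENNReal.ofReal |a - a'| * eLpNorm ξ p μ + ENNReal.ofReal |b - b'| := by
  calc _ = eLpNorm (fun x => (a - a') • ξ x + (b - b')) p μ := by
        rw [← eLpNorm_norm (fun x => (a - a') • ξ x + (b - b'))]
        congr with x
        rw [Real.norm_eq_abs, smul_eq_mul]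
        ring_nf
    _ ≤ _ := by
        simpa only [Real.enorm_eq_ofReal_abs] using eLpNorm_smul_add_const_le hξ hp1 (a - a') _

theorem eLpNorm_const_mul_norm {F : Type*} [NormedAddCommGroup F] (c : ℝ) (G : α → F) :
    eLpNorm (fun x => c * ‖G x‖) p μ = ‖c‖ₑ * eLpNorm G p μ := by
  rw [← eLpNorm_norm G, ← eLpNorm_const_smul]
  rfl

end MeasureTheory

theorem add_mul_le_max_mul_add {A B s t w : ℝ} (hs : 0 ≤ s) (ht : 0 ≤ t) (hw : 0 < w) :
    A * s + B * t ≤ max A (B / w) * (s + w * t) := by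
  have hB : B * t = B / w * (w * t) := by field_simp
  rw [hB, mul_add]
  gcongr
  · exact le_max_left _ _
  · exact le_max_right _ _

namespace ENNReal

theorem ofReal_lipschitz_terms_le {af aM bf bM c K s t w : ℝ} (haf : 0 ≤ af)
    (haM : 0 ≤ aM) (hbf : 0 ≤ bf) (hbM : 0 ≤ bM) (hc : 0 ≤ c) (hK : 0 ≤ K) (hs : 0 ≤ s)
    (ht : 0 ≤ t) (hw : 0 < w) :
    ENNReal.ofReal K * ENNReal.ofReal (aM * s) + ENNReal.ofReal K * ENNReal.ofReal (bM * t)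
        + (ENNReal.ofReal (af * s) + ENNReal.ofReal (bf * t))
        + ENNReal.ofReal w * ENNReal.ofReal (c * t)
      ≤ ENNReal.ofReal (max (af + K * aM) ((bf + K * bM) / w + c) * (s + w * t)) := by
  have hsum : (bf + K * bM) / w + c = (bf + K * bM + w * c) / w := by field_simp
  rw [hsum]
  refine le_trans (le_of_eq ?_) (ofReal_le_ofReal (add_mul_le_max_mul_add hs ht hw))
  lift af to ℝ≥0 using haf
  lift aM to ℝ≥0 using haM
  lift bf to ℝ≥0 using hbf
  lift bM to ℝ≥0 using hbM
  lift c to ℝ≥0 using hc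
  lift K to ℝ≥0 using hK
  lift s to ℝ≥0 using hs
  lift t to ℝ≥0 using ht
  lift w to ℝ≥0 using hw.le
  simp only [← NNReal.coe_mul, ← NNReal.coe_add, ofReal_coe_nnreal]
  push_cast
  ring

theorem tsum_lipschitz_terms_le {af aM bf bM c α s t : ℕ → ℝ} {K w : ℝ}
    (haf : ∀ k, 0 ≤ af k) (haM : ∀ k, 0 ≤ aM k) (hbf : ∀ k, 0 ≤ bf k) (hbM : ∀ k, 0 ≤ bM k)
    (hc : ∀ k, 0 ≤ c k) (hK : 0 ≤ K) (hs : ∀ k, 0 ≤ s k) (ht : ∀ k, 0 ≤ t k) (hw : 0 < w)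
    (hα : ∀ k, α k = max (af k + K * aM k) ((bf k + K * bM k) / w + c k)) :
    (∑' k, ENNReal.ofReal (aM k * s k) + ∑' k, ENNReal.ofReal (bM k * t k)) * ENNReal.ofReal K
        + (∑' k, ENNReal.ofReal (af k * s k) + ∑' k, ENNReal.ofReal (bf k * t k))
        + ENNReal.ofReal w * ∑' k, ENNReal.ofReal (c k * t k)
      ≤ ∑' k, ENNReal.ofReal (α k * (s k + w * t k)) := by
  rw [add_mul, mul_comm, mul_comm (∑' k, _), ← ENNReal.tsum_mul_left, ← ENNReal.tsum_mul_left,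
    ← ENNReal.tsum_mul_left, ← ENNReal.tsum_add, ← ENNReal.tsum_add, ← ENNReal.tsum_add,
    ← ENNReal.tsum_add]
  refine ENNReal.tsum_le_tsum fun k => ?_
  rw [hα k]
  exact ofReal_lipschitz_terms_le (haf k) (haM k) (hbf k) (hbM k) (hc k) hK (hs k) (ht k) hw

end ENNReal

theorem stmt_14_general {Ω : Type*} {m0 : MeasurableSpace Ω} (μ : Measure Ω) [IsProbabilityMeasure μ]
    {E : Type*} [MeasurableSpace E]
    (r : ℝ) (hr : 1 ≤ r) (dx : ℕ)
    (f M : (ℕ → ℝ) → (ℕ → EuclideanSpace ℝ (Fin dx)) → ℝ)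
    (af bf aM bM αg : ℕ → ℝ)
    (haf0 : ∀ k, 0 ≤ af k) (hbf0 : ∀ k, 0 ≤ bf k)
    (haM0 : ∀ k, 0 ≤ aM k) (hbM0 : ∀ k, 0 ≤ bM k) (hαg0 : ∀ k, 0 ≤ αg k)
    (hlipf : ∀ (y y' : ℕ → ℝ) (x x' : ℕ → EuclideanSpace ℝ (Fin dx)),
      ENNReal.ofReal |f y x - f y' x'|
        ≤ ∑' k : ℕ, ENNReal.ofReal (af k * |y k - y' k|)
          + ∑' k : ℕ, ENNReal.ofReal (bf k * ‖x k - x' k‖))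
    (hlipM : ∀ (y y' : ℕ → ℝ) (x x' : ℕ → EuclideanSpace ℝ (Fin dx)),
      ENNReal.ofReal |M y x - M y' x'|
        ≤ ∑' k : ℕ, ENNReal.ofReal (aM k * |y k - y' k|)
          + ∑' k : ℕ, ENNReal.ofReal (bM k * ‖x k - x' k‖))
    (ξ : Ω → ℝ) (η : Ω → E) (hξ : Measurable ξ)
    (hξr : eLpNorm ξ (ENNReal.ofReal r) μ < ⊤)
    (g : (ℕ → EuclideanSpace ℝ (Fin dx)) → E → EuclideanSpace ℝ (Fin dx))
    (hlipg : ∀ x x' : ℕ → EuclideanSpace ℝ (Fin dx),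
      eLpNorm (fun ω => g x (η ω) - g x' (η ω)) (ENNReal.ofReal r) μ
        ≤ ∑' k : ℕ, ENNReal.ofReal (αg k * ‖x k - x' k‖))
    (w : ℝ) (hw : 0 < w)
    (α : ℕ → ℝ)
    (hα : ∀ k, α k = max
      (af k + (eLpNorm ξ (ENNReal.ofReal r) μ).toReal * aM k)
      ((bf k + (eLpNorm ξ (ENNReal.ofReal r) μ).toReal * bM k) / w + αg k)) :
    ∀ (y yt : ℕ → ℝ) (x xt : ℕ → EuclideanSpace ℝ (Fin dx)),
      eLpNorm (fun ω =>
          |(M y x * ξ ω + f y x) - (M yt xt * ξ ω + f yt xt)|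
            + w * ‖g x (η ω) - g xt (η ω)‖) (ENNReal.ofReal r) μ
        ≤ ∑' k : ℕ, ENNReal.ofReal (α k * (|y k - yt k| + w * ‖x k - xt k‖)) := by
  intro y yt x xt
  have hp1 : 1 ≤ ENNReal.ofReal r := ENNReal.one_le_ofReal.2 hr
  calc _ ≤ eLpNorm (fun ω => |(M y x * ξ ω + f y x) - (M yt xt * ξ ω + f yt xt)|)
          (ENNReal.ofReal r) μ
        + eLpNorm (fun ω => w * ‖g x (η ω) - g xt (η ω)‖) (ENNReal.ofReal r) μ :=
        eLpNorm_add_le_of_aestronglyMeasurable_left (by fun_prop) hp1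
    _ ≤ ENNReal.ofReal |M y x - M yt xt| * eLpNorm ξ (ENNReal.ofReal r) μ
          + ENNReal.ofReal |f y x - f yt xt|
        + ENNReal.ofReal w * eLpNorm (fun ω => g x (η ω) - g xt (η ω)) (ENNReal.ofReal r) μ := by
        rw [eLpNorm_const_mul_norm, Real.enorm_eq_ofReal hw.le]
        gcongr
        exact eLpNorm_abs_mul_add_sub_le hξ.aestronglyMeasurable hp1 _ _ _ _
    _ ≤ _ := by
        rw [ENNReal.ofReal_toReal hξr.ne]
        gcongr
        exacts [hlipM y yt x xt, hlipf y yt x xt, hlipg x xt]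
    _ ≤ _ := ENNReal.tsum_lipschitz_terms_le haf0 haM0 hbf0 hbM0 hαg0 ENNReal.toReal_nonneg
        (fun k => abs_nonneg _) (fun k => norm_nonneg _) hw hα

/-- L^r contraction estimate, in the weighted norm `‖(u,v)‖_w = |u| + w‖v‖`, for the map
`F(z; ξ₀, η₀) = (M(y,x)ξ₀ + f(y,x), g(x; η₀))` driving the joint process `Z_t = (Y_t, X_t)`
of the affine causal model with exogenous covariates. The joint Lipschitz coefficients are
`α_k = max{a_k^f + ‖ξ₀‖_r a_k^M, (1/w)(b_k^f + ‖ξ₀‖_r b_k^M) + α_k(g)}`.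
Sums and L^r norms are taken in `[0,∞]`. -/
theorem stmt_14 {Ω : Type*} {m0 : MeasurableSpace Ω} (μ : Measure Ω) [IsProbabilityMeasure μ]
    {E : Type*} [MeasurableSpace E]
    (r : ℝ) (hr : 1 ≤ r) (dx : ℕ) (hdx : 1 ≤ dx)
    (f M : (ℕ → ℝ) → (ℕ → EuclideanSpace ℝ (Fin dx)) → ℝ)
    (af bf aM bM αg : ℕ → ℝ)
    (haf0 : ∀ k, 0 ≤ af k) (hbf0 : ∀ k, 0 ≤ bf k)
    (haM0 : ∀ k, 0 ≤ aM k) (hbM0 : ∀ k, 0 ≤ bM k) (hαg0 : ∀ k, 0 ≤ αg k)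
    (hafs : Summable af) (hbfs : Summable bf) (haMs : Summable aM) (hbMs : Summable bM)
    (hlipf : ∀ (y y' : ℕ → ℝ) (x x' : ℕ → EuclideanSpace ℝ (Fin dx)),
      ENNReal.ofReal |f y x - f y' x'|
        ≤ ∑' k : ℕ, ENNReal.ofReal (af k * |y k - y' k|)
          + ∑' k : ℕ, ENNReal.ofReal (bf k * ‖x k - x' k‖))
    (hlipM : ∀ (y y' : ℕ → ℝ) (x x' : ℕ → EuclideanSpace ℝ (Fin dx)),
      ENNReal.ofReal |M y x - M y' x'|
        ≤ ∑' k : ℕ, ENNReal.ofReal (aM k * |y k - y' k|)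
          + ∑' k : ℕ, ENNReal.ofReal (bM k * ‖x k - x' k‖))
    (ξ : Ω → ℝ) (η : Ω → E) (hξ : Measurable ξ) (hη : Measurable η)
    (hξr : eLpNorm ξ (ENNReal.ofReal r) μ < ⊤)
    (g : (ℕ → EuclideanSpace ℝ (Fin dx)) → E → EuclideanSpace ℝ (Fin dx))
    (hlipg : ∀ x x' : ℕ → EuclideanSpace ℝ (Fin dx),
      eLpNorm (fun ω => g x (η ω) - g x' (η ω)) (ENNReal.ofReal r) μ
        ≤ ∑' k : ℕ, ENNReal.ofReal (αg k * ‖x k - x' k‖))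
    (w : ℝ) (hw : 0 < w)
    (α : ℕ → ℝ)
    (hα : ∀ k, α k = max
      (af k + (eLpNorm ξ (ENNReal.ofReal r) μ).toReal * aM k)
      ((bf k + (eLpNorm ξ (ENNReal.ofReal r) μ).toReal * bM k) / w + αg k)) :
    ∀ (y yt : ℕ → ℝ) (x xt : ℕ → EuclideanSpace ℝ (Fin dx)),
      eLpNorm (fun ω =>
          |(M y x * ξ ω + f y x) - (M yt xt * ξ ω + f yt xt)|
            + w * ‖g x (η ω) - g xt (η ω)‖) (ENNReal.ofReal r) μ
        ≤ ∑' k : ℕ, ENNReal.ofReal (α k * (|y k - yt k| + w * ‖x k - xt k‖)) :=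
  stmt_14_general (m0 := m0) μ r hr dx f M af bf aM bM αg haf0 hbf0 haM0 hbM0 hαg0 hlipf hlipM ξ η
    hξ hξr g hlipg w hw α hα
end
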